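/- Tree Termination: the tree-recognition system (𝓛, 𝓡) with 𝓡 = {r0, r1, r2} is terminating on TLRGs, and every derivation sequence G₀ ⇒_𝓡 G₁ ⇒_𝓡 ⋯ ⇒_𝓡 G_n from a TLRG G₀ has length n at most 2·|V_{G₀}|. -/

import Mathlib

/-! # Rooted graph transformation with relabelling -/

/-- A graph over a label alphabet `(LV, LE)`: finite vertex and edge sets, total
source/target functions, a partial node-labelling function `l`, a total
edge-labelling function `m`, and a partial rootedness function `p`
(`some true` = root node, `some false` = non-root, `none` = undefined). -/
structure LGraph (LV LE : Type) : Type 1 where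
  V : Type
  E : Type
  finV : Finite V
  finE : Finite E
  s : E → V
  t : E → V
  l : V → Option LV
  m : E → LE
  p : V → Option Bool

namespace LGraph

variable {LV LE : Type}

def IsTotallyLabelled (G : LGraph LV LE) : Prop := ∀ v, (G.l v).isSome
def IsTotallyRooted (G : LGraph LV LE) : Prop := ∀ v, (G.p v).isSome
/-- totally labelled, totally rooted graph -/
def IsTLRG (G : LGraph LV LE) : Prop := G.IsTotallyLabelled ∧ G.IsTotallyRooted

/-- The number of root nodes `|p⁻¹({1})|`. -/
noncomputable def rootCount (G : LGraph LV LE) : ℕ := Nat.card {v : G.V // G.p v = some true}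

/-- The degree of a node. -/
noncomputable def degree (G : LGraph LV LE) (v : G.V) : ℕ :=
  Nat.card {e : G.E // G.s e = v} + Nat.card {e : G.E // G.t e = v}

end LGraph

/-- LGraph morphisms preserve sources, targets, edge labels, and node labels and
rootedness wherever these are defined. -/
structure Morphism {LV LE : Type} (G H : LGraph LV LE) : Type where
  fV : G.V → H.V
  fE : G.E → H.E
  src : ∀ e, fV (G.s e) = H.s (fE e)
  tgt : ∀ e, fV (G.t e) = H.t (fE e)
  edgeLabel : ∀ e, G.m e = H.m (fE e)
  nodeLabel : ∀ v x, G.l v = some x → H.l (fV v) = some x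
  rootedness : ∀ v b, G.p v = some b → H.p (fV v) = some b

namespace Morphism

variable {LV LE : Type} {G H K : LGraph LV LE}

def Injective (g : Morphism G H) : Prop := Function.Injective g.fV ∧ Function.Injective g.fE

/-- identity morphism -/
def ident (G : LGraph LV LE) : Morphism G G where
  fV := id
  fE := id
  src := fun _ => rfl
  tgt := fun _ => rfl
  edgeLabel := fun _ => rfl
  nodeLabel := fun _ _ h => h
  rootedness := fun _ _ h => h

/-- composition of morphisms -/
def comp (g : Morphism G H) (h : Morphism H K) : Morphism G K where
  fV := h.fV ∘ g.fV
  fE := h.fE ∘ g.fE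
  src := fun e => by simp [Function.comp, g.src e, h.src (g.fE e)]
  tgt := fun e => by simp [Function.comp, g.tgt e, h.tgt (g.fE e)]
  edgeLabel := fun e => by simp [Function.comp, ← h.edgeLabel (g.fE e), g.edgeLabel e]
  nodeLabel := fun v x hx => h.nodeLabel _ _ (g.nodeLabel v x hx)
  rootedness := fun v b hb => h.rootedness _ _ (g.rootedness v b hb)

end Morphism

/-- An isomorphism of graphs: a morphism with a two-sided inverse morphism. -/
structure Iso {LV LE : Type} (G H : LGraph LV LE) : Type where
  toMor : Morphism G H
  invMor : Morphism H G
  leftV : ∀ v, invMor.fV (toMor.fV v) = v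
  leftE : ∀ e, invMor.fE (toMor.fE e) = e
  rightV : ∀ v, toMor.fV (invMor.fV v) = v
  rightE : ∀ e, toMor.fE (invMor.fE e) = e

/-- A rule `⟨L ← K → R⟩`: graphs `L`, `K`, `R` together with inclusion
(injective) morphisms `K ↪ L` and `K ↪ R`.  (In the rooted relabelling setting
`L` and `R` are additionally required to be TLRGs; this requirement is stated
as a hypothesis where needed.) -/
structure Rule (LV LE : Type) : Type 1 where
  L : LGraph LV LE
  K : LGraph LV LE
  R : LGraph LV LE
  incL : Morphism K L
  incR : Morphism K R
  injL : incL.Injective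
  injR : incR.Injective

namespace Rule

variable {LV LE : Type} (r : Rule LV LE) (G : LGraph LV LE)

/-- The inverse rule `r⁻¹ = ⟨R ← K → L⟩`. -/
def inv (r : Rule LV LE) : Rule LV LE where
  L := r.R
  K := r.K
  R := r.L
  incL := r.incR
  incR := r.incL
  injL := r.injR
  injR := r.injL

/-- The dangling condition: no edge of `G ∖ g(L)` is incident to a node of `g(L ∖ K)`. -/
def Dangling (g : Morphism r.L G) : Prop :=
  ∀ e : G.E, (∀ e' : r.L.E, g.fE e' ≠ e) →
    ∀ v : r.L.V, (∀ k : r.K.V, r.incL.fV k ≠ v) →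
      G.s e ≠ g.fV v ∧ G.t e ≠ g.fV v

/-- The match `g` is applicable: it is injective and satisfies the dangling condition. -/
def Applicable (g : Morphism r.L G) : Prop := g.Injective ∧ r.Dangling G g

/-- the nodes `g(L ∖ K)` deleted by applying `r` via `g` -/
def DelV (g : Morphism r.L G) : Set G.V :=
  {x | ∃ v : r.L.V, (∀ k : r.K.V, r.incL.fV k ≠ v) ∧ g.fV v = x}

/-- the edges `g(L ∖ K)` deleted by applying `r` via `g` -/
def DelE (g : Morphism r.L G) : Set G.E :=
  {x | ∃ e : r.L.E, (∀ k : r.K.E, r.incL.fE k ≠ e) ∧ g.fE e = x}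

theorem kept_incL {g : Morphism r.L G} (hinj : g.Injective) (k : r.K.V) :
    g.fV (r.incL.fV k) ∉ r.DelV G g := by
  rintro ⟨v, hv, heq⟩
  exact hv k (hinj.1 heq).symm

theorem kept_src {g : Morphism r.L G} (h : r.Applicable G g) {e : G.E}
    (he : e ∉ r.DelE G g) : G.s e ∉ r.DelV G g := by
  rintro ⟨v, hv, heq⟩
  by_cases hc : ∃ e', g.fE e' = e
  · obtain ⟨e', rfl⟩ := hc
    by_cases hk : ∃ k, r.incL.fE k = e'
    · obtain ⟨k, rfl⟩ := hk
      have h1 : g.fV (r.L.s (r.incL.fE k)) = G.s (g.fE (r.incL.fE k)) := g.src _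
      have h2 : r.incL.fV (r.K.s k) = r.L.s (r.incL.fE k) := r.incL.src k
      have h3 : g.fV v = g.fV (r.incL.fV (r.K.s k)) := by rw [heq, h2, h1]
      exact hv _ (h.1.1 h3).symm
    · exact he ⟨e', fun k hk' => hk ⟨k, hk'⟩, rfl⟩
  · exact (h.2 e (fun e' he' => hc ⟨e', he'⟩) v hv).1 heq.symm

theorem kept_tgt {g : Morphism r.L G} (h : r.Applicable G g) {e : G.E}
    (he : e ∉ r.DelE G g) : G.t e ∉ r.DelV G g := by
  rintro ⟨v, hv, heq⟩
  by_cases hc : ∃ e', g.fE e' = e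
  · obtain ⟨e', rfl⟩ := hc
    by_cases hk : ∃ k, r.incL.fE k = e'
    · obtain ⟨k, rfl⟩ := hk
      have h1 : g.fV (r.L.t (r.incL.fE k)) = G.t (g.fE (r.incL.fE k)) := g.tgt _
      have h2 : r.incL.fV (r.K.t k) = r.L.t (r.incL.fE k) := r.incL.tgt k
      have h3 : g.fV v = g.fV (r.incL.fV (r.K.t k)) := by rw [heq, h2, h1]
      exact hv _ (h.1.1 h3).symm
    · exact he ⟨e', fun k hk' => hk ⟨k, hk'⟩, rfl⟩
  · exact (h.2 e (fun e' he' => hc ⟨e', he'⟩) v hv).2 heq.symm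

attribute [local instance] Classical.propDecidable

/-- The result graph of applying `r` to `G` via an applicable match `g`:
delete `g(L ∖ K)` (undefining labels/rootedness of images of interface nodes
where they are undefined in `K`), then add `R ∖ K` disjointly, relabelling
(and re-rooting) the images of interface nodes according to `R`. -/
noncomputable def result (g : Morphism r.L G) (h : r.Applicable G g) : LGraph LV LE where
  V := {x : G.V // x ∉ r.DelV G g} ⊕ {v : r.R.V // ∀ k, r.incR.fV k ≠ v}
  E := {x : G.E // x ∉ r.DelE G g} ⊕ {e : r.R.E // ∀ k, r.incR.fE k ≠ e}
  finV := by
    haveI := G.finV; haveI := r.R.finV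
    infer_instance
  finE := by
    haveI := G.finE; haveI := r.R.finE
    infer_instance
  s := fun e =>
    match e with
    | Sum.inl x => Sum.inl ⟨G.s x.1, r.kept_src G h x.2⟩
    | Sum.inr x =>
        if hk : ∃ k, r.incR.fV k = r.R.s x.1 then
          Sum.inl ⟨g.fV (r.incL.fV hk.choose), r.kept_incL G h.1 _⟩
        else Sum.inr ⟨r.R.s x.1, fun k hk' => hk ⟨k, hk'⟩⟩
  t := fun e =>
    match e with
    | Sum.inl x => Sum.inl ⟨G.t x.1, r.kept_tgt G h x.2⟩
    | Sum.inr x =>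
        if hk : ∃ k, r.incR.fV k = r.R.t x.1 then
          Sum.inl ⟨g.fV (r.incL.fV hk.choose), r.kept_incL G h.1 _⟩
        else Sum.inr ⟨r.R.t x.1, fun k hk' => hk ⟨k, hk'⟩⟩
  l := fun v =>
    match v with
    | Sum.inl x =>
        if hk : ∃ k : r.K.V, r.K.l k = none ∧ g.fV (r.incL.fV k) = x.1 then
          r.R.l (r.incR.fV hk.choose)
        else G.l x.1
    | Sum.inr v => r.R.l v.1
  m := fun e =>
    match e with
    | Sum.inl x => G.m x.1
    | Sum.inr x => r.R.m x.1
  p := fun v =>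
    match v with
    | Sum.inl x =>
        if hk : ∃ k : r.K.V, r.K.p k = none ∧ g.fV (r.incL.fV k) = x.1 then
          r.R.p (r.incR.fV hk.choose)
        else G.p x.1
    | Sum.inr v => r.R.p v.1

/-- Direct derivation `G ⇒_r M`: there is an applicable match `g` such that `M`
is isomorphic to the result of applying `r` to `G` via `g`. -/
def Deriv (r : Rule LV LE) (G M : LGraph LV LE) : Prop :=
  ∃ (g : Morphism r.L G) (h : r.Applicable G g), Nonempty (Iso (r.result G g h) M)

end Rule

/-- `G ⇒_𝓡 H` for a set of rules. -/
def GTStep {LV LE : Type} (Rs : Set (Rule LV LE)) (G H : LGraph LV LE) : Prop :=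
  ∃ r ∈ Rs, r.Deriv G H

/-- `G ⇒*_𝓡 H`: the reflexive-transitive closure of `⇒_𝓡`, up to isomorphism. -/
def GTDerivStar {LV LE : Type} (Rs : Set (Rule LV LE)) (G H : LGraph LV LE) : Prop :=
  Relation.ReflTransGen (GTStep Rs) G H ∨ Nonempty (Iso G H)
/-! ## The tree-recognition system -/

/-- node labels: `□` (square) and `△` (triangle) -/
inductive NodeLab : Type where
  | square : NodeLab
  | tri : NodeLab
deriving DecidableEq

/-- `L` of rule `r0`: `v1 --□--> v2`, both `□`-labelled, `v1` unrooted, `v2` rooted. -/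
abbrev L0 : LGraph NodeLab Unit where
  V := Fin 2
  E := Unit
  finV := inferInstance
  finE := inferInstance
  s := fun _ => 0
  t := fun _ => 1
  l := fun _ => some .square
  m := fun _ => ()
  p := ![some false, some true]

/-- `K` of rules `r0` and `r1`: the single node `v1`, unlabelled, rootedness undefined. -/
abbrev K0 : LGraph NodeLab Unit where
  V := Unit
  E := PEmpty
  finV := inferInstance
  finE := inferInstance
  s := PEmpty.elim
  t := PEmpty.elim
  l := fun _ => none
  m := PEmpty.elim
  p := fun _ => none

/-- `R` of rules `r0` and `r1`: the single node `v1`, labelled `□`, rooted. -/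
abbrev R0 : LGraph NodeLab Unit where
  V := Unit
  E := PEmpty
  finV := inferInstance
  finE := inferInstance
  s := PEmpty.elim
  t := PEmpty.elim
  l := fun _ => some .square
  m := PEmpty.elim
  p := fun _ => some true

def incL0 : Morphism K0 L0 where
  fV := fun _ => 0
  fE := PEmpty.elim
  src := fun e => e.elim
  tgt := fun e => e.elim
  edgeLabel := fun e => e.elim
  nodeLabel := fun _ _ h => nomatch h
  rootedness := fun _ _ h => nomatch h

def incR0 : Morphism K0 R0 where
  fV := id
  fE := PEmpty.elim
  src := fun e => e.elim
  tgt := fun e => e.elim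
  edgeLabel := fun e => e.elim
  nodeLabel := fun _ _ h => nomatch h
  rootedness := fun _ _ h => nomatch h

/-- rule `r0`: prune a rooted `□`-leaf with unrooted `□`-parent, root moves to the parent -/
def r0 : Rule NodeLab Unit where
  L := L0
  K := K0
  R := R0
  incL := incL0
  incR := incR0
  injL := ⟨Function.injective_of_subsingleton _, Function.injective_of_subsingleton _⟩
  injR := ⟨Function.injective_of_subsingleton _, Function.injective_of_subsingleton _⟩

/-- `L` of rule `r1`: like `L0` but `v1` is labelled `△`. -/
abbrev L1 : LGraph NodeLab Unit where
  V := Fin 2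
  E := Unit
  finV := inferInstance
  finE := inferInstance
  s := fun _ => 0
  t := fun _ => 1
  l := ![some .tri, some .square]
  m := fun _ => ()
  p := ![some false, some true]

def incL1 : Morphism K0 L1 where
  fV := fun _ => 0
  fE := PEmpty.elim
  src := fun e => e.elim
  tgt := fun e => e.elim
  edgeLabel := fun e => e.elim
  nodeLabel := fun _ _ h => nomatch h
  rootedness := fun _ _ h => nomatch h

/-- rule `r1`: prune a rooted `□`-leaf with unrooted `△`-parent, root moves to the
parent which becomes `□`-labelled -/
def r1 : Rule NodeLab Unit where
  L := L1
  K := K0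
  R := R0
  incL := incL1
  incR := incR0
  injL := ⟨Function.injective_of_subsingleton _, Function.injective_of_subsingleton _⟩
  injR := ⟨Function.injective_of_subsingleton _, Function.injective_of_subsingleton _⟩

/-- `L` of rule `r2`: `v1 --□--> v2`, both `□`-labelled, `v1` rooted, `v2` unrooted. -/
abbrev L2 : LGraph NodeLab Unit where
  V := Fin 2
  E := Unit
  finV := inferInstance
  finE := inferInstance
  s := fun _ => 0
  t := fun _ => 1
  l := fun _ => some .square
  m := fun _ => ()
  p := ![some true, some false]

/-- `K` of rule `r2`: nodes `v1, v2`, unlabelled, rootedness undefined, no edges. -/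
abbrev K2 : LGraph NodeLab Unit where
  V := Fin 2
  E := PEmpty
  finV := inferInstance
  finE := inferInstance
  s := PEmpty.elim
  t := PEmpty.elim
  l := fun _ => none
  m := PEmpty.elim
  p := fun _ => none

/-- `R` of rule `r2`: `v1 --□--> v2`, `v1` labelled `△` and unrooted, `v2` labelled `□`
and rooted. -/
abbrev R2 : LGraph NodeLab Unit where
  V := Fin 2
  E := Unit
  finV := inferInstance
  finE := inferInstance
  s := fun _ => 0
  t := fun _ => 1
  l := ![some .tri, some .square]
  m := fun _ => ()
  p := ![some false, some true]

def incL2 : Morphism K2 L2 where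
  fV := id
  fE := PEmpty.elim
  src := fun e => e.elim
  tgt := fun e => e.elim
  edgeLabel := fun e => e.elim
  nodeLabel := fun _ _ h => nomatch h
  rootedness := fun _ _ h => nomatch h

def incR2 : Morphism K2 R2 where
  fV := id
  fE := PEmpty.elim
  src := fun e => e.elim
  tgt := fun e => e.elim
  edgeLabel := fun e => e.elim
  nodeLabel := fun _ _ h => nomatch h
  rootedness := fun _ _ h => nomatch h

/-- rule `r2`: push the root one step down an edge, marking the old position `△` -/
def r2 : Rule NodeLab Unit where
  L := L2
  K := K2
  R := R2
  incL := incL2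
  incR := incR2
  injL := ⟨Function.injective_id, Function.injective_of_subsingleton _⟩
  injR := ⟨Function.injective_id, Function.injective_of_subsingleton _⟩

/-- the rule set of the tree-recognition system -/
def TreeRules : Set (Rule NodeLab Unit) := {r0, r1, r2}

/-! ## Trees -/

/-- `IsUndirWalk G v l w`: `l` is an undirected walk from `v` to `w` in `G`;
each step is an edge together with a boolean telling in which direction it is
traversed. -/
def IsUndirWalk {LV LE : Type} (G : LGraph LV LE) : G.V → List (G.E × Bool) → G.V → Prop
  | v, [], w => v = w
  | v, (e, true) :: rest, w => G.s e = v ∧ IsUndirWalk G (G.t e) rest w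
  | v, (e, false) :: rest, w => G.t e = v ∧ IsUndirWalk G (G.s e) rest w

/-- connectedness via undirected walks -/
def IsConnectedGraph {LV LE : Type} (G : LGraph LV LE) : Prop :=
  ∀ v w : G.V, ∃ l, IsUndirWalk G v l w

/-- an undirected cycle: a non-empty closed undirected walk without repeated edges -/
def HasUndirCycle {LV LE : Type} (G : LGraph LV LE) : Prop :=
  ∃ (v : G.V) (l : List (G.E × Bool)), l ≠ [] ∧ IsUndirWalk G v l v ∧ (l.map Prod.fst).Nodup

/-- a tree: non-empty, connected, no undirected cycles, and every node has at
most one incoming edge -/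
def IsTree {LV LE : Type} (G : LGraph LV LE) : Prop :=
  Nonempty G.V ∧ IsConnectedGraph G ∧ ¬ HasUndirCycle G ∧
    ∀ v : G.V, Nat.card {e : G.E // G.t e = v} ≤ 1

/-- an input graph: a TLRG with exactly one root node, all nodes labelled `□`
(all edges are `□`-labelled since `Unit` is the edge alphabet) -/
def IsInputGraph (G : LGraph NodeLab Unit) : Prop :=
  G.IsTLRG ∧ (∀ v, G.l v = some .square) ∧ G.rootCount = 1

/-- no rule of `Rs` is applicable to `H` -/
def InNormalForm {LV LE : Type} (Rs : Set (Rule LV LE)) (H : LGraph LV LE) : Prop :=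
  ¬ ∃ r ∈ Rs, ∃ g : Morphism r.L H, r.Applicable H g

/-! The measure `|V| + #□` (number of nodes plus number of `□`-nodes) strictly decreases along
every derivation step and is at most `2|V|` initially.

For any label weight `W(G) = ∑_v w(l_G(v))`, a step `G ⇒_{r,g} H` satisfies
`W(H) + W(L) = W(G) + W(R)`: the injective match identifies the deleted nodes of `G` with
`L ∖ K`, carrying `L`'s labels since `L` is totally labelled, the interface nodes trade their
`L`-labels for their `R`-labels, and `R ∖ K` is added. With `|V| + #□` as the weight, the rules
`r0`, `r1`, `r2` lower it by `4 - 2`, `3 - 2` and `4 - 3`. -/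

section Finsum

variable {α β M : Type*} [AddCommMonoid M]

theorem finsum_sum_type [Finite α] [Finite β] (f : α ⊕ β → M) :
    ∑ᶠ x, f x = ∑ᶠ a, f (Sum.inl a) + ∑ᶠ b, f (Sum.inr b) := by
  have := Fintype.ofFinite α
  have := Fintype.ofFinite β
  simp only [finsum_eq_sum_of_fintype, Fintype.sum_sum_type]

theorem finsum_subtype_add_finsum_subtype [Finite α] (p : α → Prop) (f : α → M) :
    ∑ᶠ a : {a // p a}, f a + ∑ᶠ a : {a // ¬ p a}, f a = ∑ᶠ a, f a := by
  classical
  have := Fintype.ofFinite α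
  simp only [finsum_eq_sum_of_fintype]
  exact Fintype.sum_subtype_add_sum_subtype p f

theorem finsum_eq_finsum_compl_range_add [Finite α] {i : β → α} (hi : Function.Injective i)
    (f : α → M) : ∑ᶠ a, f a = ∑ᶠ a : {a // ∀ b, i b ≠ a}, f a + ∑ᶠ b, f (i b) := by
  let e : β ≃ {a // ¬ ∀ b, i b ≠ a} :=
    Equiv.ofBijective (fun b => ⟨i b, fun h => h b rfl⟩)
      ⟨fun b b' h => hi (congrArg Subtype.val h), fun ⟨a, ha⟩ => by
        push Not at ha
        obtain ⟨b, rfl⟩ := ha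
        exact ⟨b, rfl⟩⟩
  rw [← finsum_subtype_add_finsum_subtype (fun a => ∀ b, i b ≠ a) f,
    ← finsum_comp_equiv e]
  rfl

end Finsum

section LabelWeight

variable {LV LE : Type} {M : Type*} [AddCommMonoid M]

noncomputable def LGraph.labelWeight (G : LGraph LV LE) (w : Option LV → M) : M :=
  ∑ᶠ v, w (G.l v)

theorem Morphism.l_map_of_isTotallyLabelled {G H : LGraph LV LE} (hG : G.IsTotallyLabelled)
    (g : Morphism G H) (v : G.V) : H.l (g.fV v) = G.l v := by
  obtain ⟨a, ha⟩ := Option.isSome_iff_exists.mp (hG v)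
  rw [ha, g.nodeLabel v a ha]

theorem Iso.l_map {G H : LGraph LV LE} (i : Iso G H) (v : G.V) :
    H.l (i.toMor.fV v) = G.l v := by
  cases hv : G.l v with
  | some a => exact i.toMor.nodeLabel v a hv
  | none =>
    cases hw : H.l (i.toMor.fV v) with
    | none => rfl
    | some a => simpa [i.leftV, hv] using i.invMor.nodeLabel _ a hw

theorem Iso.labelWeight_eq {G H : LGraph LV LE} (i : Iso G H) (w : Option LV → M) :
    H.labelWeight w = G.labelWeight w := by
  have := G.finV
  let e : G.V ≃ H.V := ⟨i.toMor.fV, i.invMor.fV, i.leftV, i.rightV⟩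
  simp only [LGraph.labelWeight, ← finsum_comp_equiv e]
  exact finsum_congr fun v => congrArg w (i.l_map v)

namespace Rule

variable {r : Rule LV LE} {G : LGraph LV LE} {g : Morphism r.L G}

theorem result_l_inl_incL (h : r.Applicable G g) (k : r.K.V) :
    (r.result G g h).l (Sum.inl ⟨g.fV (r.incL.fV k), r.kept_incL G h.1 k⟩) =
      r.R.l (r.incR.fV k) := by
  classical
  show (if hk : _ then _ else _) = _
  split_ifs with hk
  · obtain ⟨-, hk'⟩ := hk.choose_spec
    rw [r.injL.1 (h.1.1 hk')]
  · obtain ⟨a, ha⟩ := Option.ne_none_iff_exists'.mp fun hnone => hk ⟨k, hnone, rfl⟩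
    rw [g.nodeLabel _ a (r.incL.nodeLabel k a ha), r.incR.nodeLabel k a ha]

theorem result_l_inl_of_forall_ne (h : r.Applicable G g) (x : {x : G.V // x ∉ r.DelV G g})
    (hx : ∀ k, g.fV (r.incL.fV k) ≠ x.1) : (r.result G g h).l (Sum.inl x) = G.l x.1 := by
  classical
  show (if hk : _ then _ else _) = _
  rw [dif_neg fun ⟨k, _, hk⟩ => hx k hk]

theorem labelWeight_eq_finsum_kept_add (h : r.Applicable G g) (hL : r.L.IsTotallyLabelled)
    (w : Option LV → M) :
    G.labelWeight w = ∑ᶠ x : {x // x ∉ r.DelV G g}, w (G.l x) +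
      ∑ᶠ v : {v // ∀ k, r.incL.fV k ≠ v}, w (r.L.l v) := by
  have := G.finV
  let e : {v // ∀ k, r.incL.fV k ≠ v} ≃ {x // x ∈ r.DelV G g} :=
    Equiv.ofBijective (fun v => ⟨g.fV v, v, v.2, rfl⟩)
      ⟨fun v v' hvv' => Subtype.ext (h.1.1 (congrArg Subtype.val hvv')),
        fun ⟨_, v, hv, hx⟩ => ⟨⟨v, hv⟩, Subtype.ext hx⟩⟩
  rw [LGraph.labelWeight, ← finsum_subtype_add_finsum_subtype (· ∈ r.DelV G g), add_comm,
    ← finsum_comp_equiv e]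
  exact congrArg _ (finsum_congr fun v => congrArg w (g.l_map_of_isTotallyLabelled hL v))

theorem finsum_kept_result_add (h : r.Applicable G g) (hL : r.L.IsTotallyLabelled)
    (w : Option LV → M) :
    ∑ᶠ x : {x // x ∉ r.DelV G g}, w ((r.result G g h).l (Sum.inl x)) +
        ∑ᶠ k, w (r.L.l (r.incL.fV k)) =
      ∑ᶠ x : {x // x ∉ r.DelV G g}, w (G.l x) + ∑ᶠ k, w (r.R.l (r.incR.fV k)) := by
  have := G.finV
  let i : r.K.V → {x // x ∉ r.DelV G g} := fun k => ⟨g.fV (r.incL.fV k), r.kept_incL G h.1 k⟩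
  have hi : Function.Injective i := fun k k' hkk' =>
    r.injL.1 (h.1.1 (congrArg Subtype.val hkk'))
  rw [finsum_eq_finsum_compl_range_add hi, finsum_eq_finsum_compl_range_add hi fun x => w (G.l x),
    finsum_congr fun x : {x // ∀ k, i k ≠ x} => congrArg w
      (result_l_inl_of_forall_ne h x.1 fun k hk => x.2 k (Subtype.ext hk))]
  simp only [i, result_l_inl_incL, g.l_map_of_isTotallyLabelled hL]
  exact add_right_comm _ _ _

theorem labelWeight_result (h : r.Applicable G g) (w : Option LV → M) :
    (r.result G g h).labelWeight w =
      ∑ᶠ x : {x // x ∉ r.DelV G g}, w ((r.result G g h).l (Sum.inl x)) +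
        ∑ᶠ v : {v // ∀ k, r.incR.fV k ≠ v}, w (r.R.l v) := by
  have := G.finV
  have := r.R.finV
  exact finsum_sum_type (α := {x // x ∉ r.DelV G g}) (β := {v // ∀ k, r.incR.fV k ≠ v}) _

theorem labelWeight_result_add (h : r.Applicable G g) (hL : r.L.IsTotallyLabelled)
    (w : Option LV → M) :
    (r.result G g h).labelWeight w + r.L.labelWeight w = G.labelWeight w + r.R.labelWeight w := by
  have := r.L.finV
  have := r.R.finV
  rw [labelWeight_result, labelWeight_eq_finsum_kept_add h hL, LGraph.labelWeight,
    LGraph.labelWeight, finsum_eq_finsum_compl_range_add r.injL.1,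
    finsum_eq_finsum_compl_range_add r.injR.1]
  calc _ = (∑ᶠ x : {x // x ∉ r.DelV G g}, w ((r.result G g h).l (Sum.inl x)) +
          ∑ᶠ k, w (r.L.l (r.incL.fV k))) +
        (∑ᶠ v : {v // ∀ k, r.incR.fV k ≠ v}, w (r.R.l v) +
          ∑ᶠ v : {v // ∀ k, r.incL.fV k ≠ v}, w (r.L.l v)) := by abel
    _ = _ := by rw [finsum_kept_result_add h hL]; abel

end Rule

theorem Rule.Deriv.labelWeight_add {r : Rule LV LE} {G H : LGraph LV LE} (hd : r.Deriv G H)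
    (hL : r.L.IsTotallyLabelled) (w : Option LV → M) :
    H.labelWeight w + r.L.labelWeight w = G.labelWeight w + r.R.labelWeight w := by
  obtain ⟨g, h, ⟨i⟩⟩ := hd
  rw [i.labelWeight_eq]
  exact r.labelWeight_result_add h hL w

theorem LGraph.labelWeight_le_card_mul (G : LGraph LV LE) {w : Option LV → ℕ} {b : ℕ}
    (hw : ∀ o, w o ≤ b) : G.labelWeight w ≤ Nat.card G.V * b := by
  have := G.finV
  have := Fintype.ofFinite G.V
  rw [LGraph.labelWeight, finsum_eq_sum_of_fintype, Nat.card_eq_fintype_card, ← smul_eq_mul,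
    ← Finset.card_univ]
  exact Finset.sum_le_card_nsmul _ _ _ fun v _ => hw _

theorem add_le_of_forall_succ_lt {μ : ℕ → ℕ} {n : ℕ} (h : ∀ i < n, μ (i + 1) < μ i) :
    μ n + n ≤ μ 0 := by
  induction n with
  | zero => rfl
  | succ n ih =>
    have := h n n.lt_succ_self
    have := ih fun i hi => h i (hi.trans n.lt_succ_self)
    omega

end LabelWeight

/-- Summed over the nodes of `G`, this is `|V_G| + #□(G)`. -/
def treeWeight : Option NodeLab → ℕ
  | some .square => 2
  | _ => 1

theorem isTotallyLabelled_L_of_mem_treeRules {r : Rule NodeLab Unit} (hr : r ∈ TreeRules) :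
    r.L.IsTotallyLabelled := by
  rcases hr with rfl | rfl | rfl <;> exact fun v : Fin 2 => by fin_cases v <;> rfl

theorem labelWeight_R_lt_L_of_mem_treeRules {r : Rule NodeLab Unit} (hr : r ∈ TreeRules) :
    r.R.labelWeight treeWeight < r.L.labelWeight treeWeight := by
  rcases hr with rfl | rfl | rfl <;>
    simp [LGraph.labelWeight, finsum_eq_sum_of_fintype, r0, r1, r2, treeWeight]

theorem labelWeight_lt_of_gtStep {G H : LGraph NodeLab Unit} (hs : GTStep TreeRules G H) :
    H.labelWeight treeWeight < G.labelWeight treeWeight := by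
  obtain ⟨r, hr, hd⟩ := hs
  have := hd.labelWeight_add (isTotallyLabelled_L_of_mem_treeRules hr) treeWeight
  have := labelWeight_R_lt_L_of_mem_treeRules hr
  omega

/-- **Tree Termination**: the tree-recognition system is terminating on TLRGs,
and every derivation sequence from a TLRG `G₀` has length at most `2·|V_{G₀}|`. -/
theorem tree_termination :
    (¬ ∃ f : ℕ → LGraph NodeLab Unit, (f 0).IsTLRG ∧
        ∀ n, GTStep TreeRules (f n) (f (n + 1))) ∧
    (∀ (n : ℕ) (f : ℕ → LGraph NodeLab Unit), (f 0).IsTLRG →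
        (∀ i < n, GTStep TreeRules (f i) (f (i + 1))) →
        n ≤ 2 * Nat.card (f 0).V) := by
  constructor
  · rintro ⟨f, -, hf⟩
    exact not_strictAnti_of_wellFoundedLT (fun n => (f n).labelWeight treeWeight)
      (strictAnti_nat_of_succ_lt fun n => labelWeight_lt_of_gtStep (hf n))
  · intro n f _ hf
    have hlen := add_le_of_forall_succ_lt (μ := fun i => (f i).labelWeight treeWeight)
      fun i hi => labelWeight_lt_of_gtStep (hf i hi)
    have hbound := (f 0).labelWeight_le_card_mul (w := treeWeight) (b := 2) fun o => by
      rcases o with _ | _ | _ <;> decide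
    omega
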